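/- Shapley value as average marginal contribution over orderings: for a finite set D of n points, element k, and valuation U, the value (1/n)·Σ_{d ⊆ D\{k}} (U(d ∪ {k}) − U(d)) / C(n−1, |d|) equals (1/n!)·Σ_{σ ∈ Perm(D)} (U(P_σ(k) ∪ {k}) − U(P_σ(k))), where P_σ(k) is the set of elements preceding k in the ordering σ. -/

import Mathlib

/-!
Group the orderings by the set `d` of predecessors of `k`. An ordering has predecessor set `d`
exactly when `d` is a prefix of it and `k` comes right after `d`; splitting it into a numbering of
`d` and a numbering of the complement that starts with `k` shows there are `|d|! (n - |d| - 1)!`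
such orderings. Since `n · C(n - 1, |d|) · |d|! · (n - 1 - |d|)! = n!`, the weights agree.
-/

open Finset Fintype Nat

namespace Numbering

variable {X : Type*} [Fintype X]

def predecessors (f : Numbering X) (k : X) : Finset X := {x | f x < f k}

lemma card_predecessors (f : Numbering X) (k : X) : #(f.predecessors k) = f k := by
  have : f.predecessors k = (Iio (f k)).map f.symm.toEmbedding := by
    ext x
    simp [predecessors]
  rw [this, card_map, Fin.card_Iio]

lemma predecessors_eq_iff {f : Numbering X} {k : X} {d : Finset X} :
    f.predecessors k = d ↔ IsPrefix f d ∧ (f k : ℕ) = #d := by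
  constructor
  · rintro rfl
    refine ⟨fun x => ?_, (card_predecessors f k).symm⟩
    rw [card_predecessors]
    simp [predecessors]
  · rintro ⟨hd, hk⟩
    ext x
    simp [predecessors, hd x, Fin.lt_def, hk]

variable [DecidableEq X]

lemma card_filter_apply_eq_zero (y : X) :
    #{g : Numbering X | (g y : ℕ) = 0} = (card X - 1)! := by
  have : ({g : Numbering X | (g y : ℕ) = 0} : Finset _) = prefixed {y} := by
    ext g
    simp only [mem_filter, mem_univ, true_and, mem_prefixed, IsPrefix, mem_singleton,
      card_singleton, Nat.lt_one_iff]
    constructor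
    · intro h x
      rw [← h, Fin.val_inj, g.apply_eq_iff_eq]
    · intro h
      exact (h y).1 rfl
  rw [this, card_prefixed, card_singleton, factorial_one, one_mul]

lemma card_filter_predecessors_eq {k : X} {d : Finset X} (hk : k ∉ d) :
    #{f : Numbering X | f.predecessors k = d} = (#d)! * (card X - #d - 1)! := by
  let k' : ↥dᶜ := ⟨k, mem_compl.2 hk⟩
  -- `prefixedEquiv d` numbers the complement of `d` by `x ↦ f x - #d`.
  have hshift : ∀ f : prefixed d,
      ((f : Numbering X) k : ℕ) = #d ↔ ((prefixedEquiv d f).2 k' : ℕ) = 0 := by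
    intro f
    have := (mem_prefixed.1 f.2 k).not.1 hk
    simp [prefixedEquiv, k']
    omega
  calc #{f : Numbering X | f.predecessors k = d}
      = card {f : prefixed d // ((f : Numbering X) k : ℕ) = #d} := by
        rw [← Fintype.card_subtype]
        exact card_congr ((Equiv.subtypeSubtypeEquivSubtypeInter (· ∈ prefixed d) _).trans
          (Equiv.subtypeEquivRight (q := (·.predecessors k = d)) fun f => by
            rw [mem_prefixed, predecessors_eq_iff])).symm
    _ = card {p : Numbering d × Numbering ↥dᶜ // (p.2 k' : ℕ) = 0} :=
        card_congr ((prefixedEquiv d).subtypeEquiv hshift)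
    _ = #((univ : Finset (Numbering d)) ×ˢ
          univ.filter fun g : Numbering ↥dᶜ => (g k' : ℕ) = 0) := by
        rw [Fintype.card_subtype, ← filter_product_right]; rfl
    _ = (#d)! * (card X - #d - 1)! := by
        rw [card_product, card_filter_apply_eq_zero]
        simp

lemma sum_predecessors {M : Type*} [AddCommMonoid M] (k : X) (F : Finset X → M) :
    ∑ f : Numbering X, F (f.predecessors k)
      = ∑ d ∈ (univ.erase k).powerset, ((#d)! * (card X - #d - 1)!) • F d := by
  have hmaps : ∀ f ∈ (univ : Finset (Numbering X)),
      f.predecessors k ∈ (univ.erase k).powerset := by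
    intro f _
    simp only [mem_powerset, subset_iff, predecessors, mem_filter, mem_erase]
    rintro x ⟨-, hx⟩
    exact ⟨ne_of_apply_ne f hx.ne, mem_univ x⟩
  rw [← sum_fiberwise_of_maps_to hmaps]
  refine Finset.sum_congr rfl fun d hd => ?_
  have hk : k ∉ d := fun h => by simpa using mem_powerset.1 hd h
  rw [Finset.sum_congr rfl fun f hf => by rw [(mem_filter.1 hf).2], sum_const,
    card_filter_predecessors_eq hk]

end Numbering

theorem shapley_eq_average_over_orderings_general {α : Type*} [Fintype α] [DecidableEq α]
    (n : ℕ) (hn : Fintype.card α = n) (k : α) (U : Finset α → ℝ) :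
    (1 / (n : ℝ)) * ∑ d ∈ ((Finset.univ : Finset α).erase k).powerset,
        (U (insert k d) - U d) / ((n - 1).choose d.card)
      = (1 / (n.factorial : ℝ)) * ∑ σ : Fin n ≃ α,
          (U (insert k ({x | σ.symm x < σ.symm k} : Finset α))
            - U ({x | σ.symm x < σ.symm k} : Finset α)) := by
  subst hn
  -- `σ ↦ σ.symm` turns orderings into numberings, and `{x | σ.symm x < σ.symm k}` is
  -- `σ.symm.predecessors k` by definition.
  erw [← (Equiv.symmEquiv α _).sum_comp,
    Numbering.sum_predecessors k fun d => U (insert k d) - U d]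
  rw [mul_sum, mul_sum]
  refine Finset.sum_congr rfl fun d hd => ?_
  have hN : 0 < card α := card_pos_iff.2 ⟨k⟩
  have hd : #d ≤ card α - 1 := by
    simpa [card_erase_of_mem] using card_le_card (mem_powerset.1 hd)
  rw [nsmul_eq_mul, Nat.cast_choose ℝ hd, ← Nat.mul_factorial_pred hN.ne', Nat.sub_right_comm]
  push_cast
  field_simp

/-- Shapley value as average marginal contribution over orderings: the subset form with
weight `1/n` equals the average over all bijections `σ : Fin n ≃ α` of the marginal
contribution of `k` to the set of elements preceding `k` in the ordering `σ`. -/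
theorem shapley_eq_average_over_orderings {α : Type*} [Fintype α] [DecidableEq α]
    (n : ℕ) (hn : Fintype.card α = n) (h1 : 1 ≤ n) (k : α) (U : Finset α → ℝ) :
    (1 / (n : ℝ)) * ∑ d ∈ ((Finset.univ : Finset α).erase k).powerset,
        (U (insert k d) - U d) / ((n - 1).choose d.card)
      = (1 / (n.factorial : ℝ)) * ∑ σ : Fin n ≃ α,
          (U (insert k ({x | σ.symm x < σ.symm k} : Finset α))
            - U ({x | σ.symm x < σ.symm k} : Finset α)) :=
  shapley_eq_average_over_orderings_general n hn k U
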